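/- arXiv:2404.08297 — 3 statements merged into one kernel-verified Lean document; each statement's English description precedes it below -/
import Mathlib

section
/- Let U be a Hilbert space with a family of orthogonal projections P_τ (indexed by τ in a time axis T). If an operator G: U → U is causal (i.e., P_τ G = P_τ G P_τ for all τ), then G is passive (i.e., ⟨P_τ u, P_τ G u⟩ ≥ 0 for all u and τ) if and only if G is nonnegative (i.e., ⟨G u, u⟩ ≥ 0 for all u, together with the assumption that P_τ → I strongly or that nonnegativity is defined via all u). -/
open RealInnerProductSpace

/-- If `G` is causal and every vector is fixed by some truncation `P τ`, then
`G` is passive iff `G` is nonnegative. -/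
theorem causal_passive_iff_nonneg
    {U : Type*} [NormedAddCommGroup U] [InnerProductSpace ℝ U] [CompleteSpace U]
    {T : Type*} (P : T → U →L[ℝ] U)
    (hidem : ∀ τ, (P τ).comp (P τ) = P τ)
    (hsa : ∀ τ, ContinuousLinearMap.adjoint (P τ) = P τ)
    (G : U → U)
    (hcausal : ∀ τ u, P τ (G u) = P τ (G (P τ u)))
    (hexh : ∀ u, ∃ τ, P τ u = u) :
    (∀ τ u, 0 ≤ ⟪P τ u, P τ (G u)⟫) ↔ (∀ u, 0 ≤ ⟪G u, u⟫) := by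
  have key : ∀ τ (x y : U), ⟪P τ x, y⟫ = ⟪x, P τ y⟫ := by
    intro τ x y
    conv_rhs => rw [← hsa τ]
    rw [ContinuousLinearMap.adjoint_inner_right]
  have proj : ∀ τ (x : U), P τ (P τ x) = P τ x := by
    intro τ x
    have := congrArg (fun f : U →L[ℝ] U => f x) (hidem τ)
    simpa using this
  constructor
  · intro h u
    obtain ⟨τ, hτ⟩ := hexh u
    have := h τ u
    rw [hτ, ← key, hτ, real_inner_comm] at this
    exact this
  · intro h τ u
    rw [hcausal τ u, key, proj, ← key, real_inner_comm]
    exact h (P τ u)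
end

section
/- Let Π be the orthogonal projection of W onto the finite-dimensional subspace Ŵ = ∑ᵢ im φ(uᵢ), and let Φ ∈ B(Uⁿ, W) be given by Φ(v₁,…,vₙ) = ∑ᵢ φ(uᵢ) vᵢ. Then there exists a self-adjoint operator N ∈ B(Uⁿ) such that Π = Φ N Φ*. -/
/-! `Pr` is the orthogonal projection onto its range `Ŵ ⊆ range Φ`. Pick an orthonormal basis
`b₁, …, b_K` of `Ŵ` and preimages `bₖ = Φ xₖ`; then
`Pr = ∑ₖ bₖ bₖ* = ∑ₖ Φ xₖ xₖ* Φ* = Φ (∑ₖ xₖ xₖ*) Φ*`, and `N = ∑ₖ xₖ xₖ*` is self-adjoint. -/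

open ContinuousLinearMap InnerProductSpace

instance piLpCompleteSpace {ι : Type*} [Fintype ι] (U : Type*) [NormedAddCommGroup U]
    [InnerProductSpace ℝ U] [CompleteSpace U] :
    CompleteSpace (PiLp 2 (fun _ : ι => U)) :=
  inferInstance

section

variable {𝕜 E F : Type*} [RCLike 𝕜] [NormedAddCommGroup E] [InnerProductSpace 𝕜 E]
  [NormedAddCommGroup F] [InnerProductSpace 𝕜 F] [CompleteSpace E] [CompleteSpace F]

theorem ContinuousLinearMap.comp_rankOne_self_comp_adjoint (T : E →L[𝕜] F) (x : E) :
    T ∘L rankOne 𝕜 x x ∘L adjoint T = rankOne 𝕜 (T x) (T x) := by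
  rw [rankOne_comp, comp_rankOne, adjoint_adjoint]

theorem Submodule.exists_starProjection_eq_comp_comp_adjoint (T : E →L[𝕜] F)
    (K : Submodule 𝕜 F) [FiniteDimensional 𝕜 K] (hK : K ≤ T.range) :
    ∃ N : E →L[𝕜] E, adjoint N = N ∧ K.starProjection = T ∘L N ∘L adjoint T := by
  let b := stdOrthonormalBasis 𝕜 K
  choose x hx using fun i => hK (b i).2
  refine ⟨∑ i, rankOne 𝕜 (x i) (x i), by simp, ?_⟩
  simp_rw [b.starProjection_eq_sum_rankOne, finsetSum_comp, comp_finsetSum,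
    comp_rankOne_self_comp_adjoint, ← coe_coe T, hx]

theorem ContinuousLinearMap.eq_starProjection_range (p : E →L[𝕜] E)
    [p.range.HasOrthogonalProjection] (hidem : p ∘L p = p) (hsa : adjoint p = p) :
    p = p.range.starProjection := by
  have hp : IsStarProjection p := ⟨hidem, by rw [IsSelfAdjoint, star_eq_adjoint, hsa]⟩
  obtain ⟨_, hp_eq⟩ := isStarProjection_iff_eq_starProjection_range.mp hp
  exact hp_eq

end

theorem PiLp.sum_range_le_range {R W ι : Type*} [Semiring R] [AddCommMonoid W] [Module R W]
    [Fintype ι] [DecidableEq ι] {p : ENNReal} {β : ι → Type*} [∀ i, AddCommGroup (β i)]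
    [∀ i, Module R (β i)] (f : ∀ i, β i →ₗ[R] W) (Φ : PiLp p β →ₗ[R] W)
    (hΦ : ∀ v, Φ v = ∑ i, f i (v i)) :
    ∑ i, LinearMap.range (f i) ≤ LinearMap.range Φ := by
  refine Finset.sum_induction _ (· ≤ LinearMap.range Φ) (fun _ _ => sup_le) bot_le
    fun i _ => ?_
  rintro _ ⟨x, rfl⟩
  refine ⟨PiLp.single p i x, ?_⟩
  rw [hΦ, Fintype.sum_eq_single i fun j hj => by simp [hj]]
  simp

/-- The orthogonal projection onto `Ŵ = ∑ᵢ im φ(uᵢ)` can be written as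
`Φ N Φ*` for a self-adjoint `N ∈ B(Uⁿ)`. -/
theorem projection_eq_Phi_N_Phi_star
    {U W : Type*} [NormedAddCommGroup U] [InnerProductSpace ℝ U]
    [FiniteDimensional ℝ U]
    [NormedAddCommGroup W] [InnerProductSpace ℝ W] [CompleteSpace W]
    (n : ℕ) (u : Fin n → U) (φ : U → (U →L[ℝ] W))
    (Φ : PiLp 2 (fun _ : Fin n => U) →L[ℝ] W)
    (hΦ : ∀ v : PiLp 2 (fun _ : Fin n => U), Φ v = ∑ i, φ (u i) (v i))
    (Pr : W →L[ℝ] W)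
    (hidem : Pr.comp Pr = Pr)
    (hsa : ContinuousLinearMap.adjoint Pr = Pr)
    (hrange : LinearMap.range (Pr : W →ₗ[ℝ] W)
      = ∑ i, LinearMap.range ((φ (u i) : U →ₗ[ℝ] W))) :
    ∃ N : PiLp 2 (fun _ : Fin n => U) →L[ℝ] PiLp 2 (fun _ : Fin n => U),
      ContinuousLinearMap.adjoint N = N ∧
      Pr = Φ.comp (N.comp (ContinuousLinearMap.adjoint Φ)) := by
  have hle : Pr.range ≤ Φ.range := by
    rw [hrange]
    exact PiLp.sum_range_le_range _ _ hΦ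
  have : FiniteDimensional ℝ Pr.range := Submodule.finiteDimensional_of_le hle
  obtain ⟨N, hN, hPr⟩ := Pr.range.exists_starProjection_eq_comp_comp_adjoint Φ hle
  exact ⟨N, hN, (Pr.eq_starProjection_range hidem hsa).trans hPr⟩
end

section
/- With Π and Φ as above, the set {Π Q Π : Q ∈ B⁺(W)} equals {Φ M Φ* : M ∈ B⁺(Uⁿ)}, where B⁺ denotes nonnegative bounded operators. -/
open RealInnerProductSpace

/-!
`Π` is the orthogonal projection onto `range Φ = ∑ᵢ range φ(uᵢ)`, so `Π Φ = Φ` and `Φ* Π = Φ*`,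
whence `Φ M Φ* = Π (Φ M Φ*) Π`. Conversely, `U` being finite-dimensional, `Π` factors as `Φ G`
with `G` bounded, and then `Π Q Π = Π Q Π* = Φ (G Q G*) Φ*`. Both conjugations preserve
nonnegativity of the quadratic form.
-/

open ContinuousLinearMap

theorem LinearMap.range_eq_sum_range_of_apply_eq_sum {R F ι : Type*} [Semiring R] [Fintype ι]
    [DecidableEq ι] {p : ENNReal} {U : ι → Type*} [∀ i, AddCommGroup (U i)] [∀ i, Module R (U i)]
    [AddCommMonoid F] [Module R F] (Φ : PiLp p U →ₗ[R] F) (g : ∀ i, U i →ₗ[R] F)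
    (hΦ : ∀ v, Φ v = ∑ i, g i (v i)) :
    LinearMap.range Φ = ∑ i, LinearMap.range (g i) := by
  show _ = Finset.univ.sup _
  apply le_antisymm
  · rintro _ ⟨v, rfl⟩
    rw [hΦ]
    exact Submodule.sum_mem _ fun i _ => Finset.le_sup (f := fun i => LinearMap.range (g i))
      (Finset.mem_univ i) ⟨v i, rfl⟩
  · refine Finset.sup_le fun i _ => ?_
    rintro _ ⟨y, rfl⟩
    refine ⟨WithLp.toLp p (Pi.single i y), ?_⟩
    rw [hΦ, Fintype.sum_eq_single i fun j hj => by simp [Pi.single_eq_of_ne hj]]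
    simp

theorem ContinuousLinearMap.exists_comp_eq_of_range_le {𝕜 E F G : Type*}
    [NontriviallyNormedField 𝕜] [CompleteSpace 𝕜] [NormedAddCommGroup E] [NormedSpace 𝕜 E]
    [FiniteDimensional 𝕜 E] [NormedAddCommGroup F] [NormedSpace 𝕜 F]
    [NormedAddCommGroup G] [NormedSpace 𝕜 G]
    (Φ : E →L[𝕜] F) (A : G →L[𝕜] F)
    (h : LinearMap.range (A : G →ₗ[𝕜] F) ≤ LinearMap.range (Φ : E →ₗ[𝕜] F)) :
    ∃ B : G →L[𝕜] E, Φ ∘L B = A := by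
  obtain ⟨g, hg⟩ := Φ.rangeRestrict.exists_rightInverse_of_surjective (by simp)
  let A' : G →L[𝕜] LinearMap.range (Φ : E →ₗ[𝕜] F) := A.codRestrict _ fun x => h ⟨x, rfl⟩
  refine ⟨g ∘L A', ?_⟩
  ext x
  exact congr(($hg (A' x) : F))

theorem ContinuousLinearMap.inner_comp_comp_adjoint_apply_self_nonneg {E F : Type*}
    [NormedAddCommGroup E] [InnerProductSpace ℝ E] [CompleteSpace E]
    [NormedAddCommGroup F] [InnerProductSpace ℝ F] [CompleteSpace F]
    (T : E →L[ℝ] F) {Q : E →L[ℝ] E} (hQ : ∀ x, 0 ≤ ⟪Q x, x⟫) (y : F) :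
    0 ≤ ⟪(T ∘L Q ∘L adjoint T) y, y⟫ := by
  rw [comp_apply, comp_apply, ← adjoint_inner_right]
  exact hQ _

/-- The set `{Π Q Π : Q ∈ B⁺(W)}` coincides with `{Φ M Φ* : M ∈ B⁺(Uⁿ)}`. -/
theorem projection_conj_set_eq_Phi_set
    {U W : Type*} [NormedAddCommGroup U] [InnerProductSpace ℝ U]
    [FiniteDimensional ℝ U]
    [NormedAddCommGroup W] [InnerProductSpace ℝ W] [CompleteSpace W]
    (n : ℕ) (u : Fin n → U) (φ : U → (U →L[ℝ] W))
    (Φ : PiLp 2 (fun _ : Fin n => U) →L[ℝ] W)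
    (hΦ : ∀ v : PiLp 2 (fun _ : Fin n => U), Φ v = ∑ i, φ (u i) (v i))
    (Pr : W →L[ℝ] W)
    (hidem : Pr.comp Pr = Pr)
    (hsa : ContinuousLinearMap.adjoint Pr = Pr)
    (hrange : LinearMap.range (Pr : W →ₗ[ℝ] W)
      = ∑ i, LinearMap.range ((φ (u i) : U →ₗ[ℝ] W))) :
    {R : W →L[ℝ] W | ∃ Q : W →L[ℝ] W, (∀ w, 0 ≤ ⟪Q w, w⟫) ∧ R = Pr.comp (Q.comp Pr)}
      = {R : W →L[ℝ] W | ∃ M : PiLp 2 (fun _ : Fin n => U) →L[ℝ] PiLp 2 (fun _ : Fin n => U),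
          (∀ x, 0 ≤ ⟪M x, x⟫) ∧ R = Φ.comp (M.comp (ContinuousLinearMap.adjoint Φ))} := by
  have hrangeΦ : LinearMap.range (Φ : PiLp 2 (fun _ : Fin n => U) →ₗ[ℝ] W) =
      LinearMap.range (Pr : W →ₗ[ℝ] W) :=
    (LinearMap.range_eq_sum_range_of_apply_eq_sum _ (fun i => (φ (u i) : U →ₗ[ℝ] W)) hΦ).trans
      hrange.symm
  have hPrΦ : Pr ∘L Φ = Φ := by
    have hproj : IsIdempotentElem (Pr : W →ₗ[ℝ] W) := congr(($hidem : W →ₗ[ℝ] W))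
    ext v
    exact (LinearMap.IsIdempotentElem.mem_range_iff hproj).mp (hrangeΦ.le ⟨v, rfl⟩)
  have hΦPr : adjoint Φ ∘L Pr = adjoint Φ := by
    rw [← hsa, ← adjoint_comp, hPrΦ]
  obtain ⟨G, hG⟩ := Φ.exists_comp_eq_of_range_le Pr hrangeΦ.ge
  ext R
  constructor
  · rintro ⟨Q, hQ, rfl⟩
    refine ⟨G ∘L Q ∘L adjoint G, G.inner_comp_comp_adjoint_apply_self_nonneg hQ, ?_⟩
    calc Pr ∘L Q ∘L Pr = Pr ∘L Q ∘L adjoint Pr := by rw [hsa]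
      _ = Φ ∘L (G ∘L Q ∘L adjoint G) ∘L adjoint Φ := by
        rw [← hG, adjoint_comp]
        simp only [comp_assoc]
  · rintro ⟨M, hM, rfl⟩
    refine ⟨Φ ∘L M ∘L adjoint Φ, Φ.inner_comp_comp_adjoint_apply_self_nonneg hM, ?_⟩
    simp only [← comp_assoc, hPrΦ]
    simp only [comp_assoc, hΦPr]
end
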